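/- arXiv:1806.06502 — 2 statements merged into one kernel-verified Lean document; each statement's English description precedes it below -/
import Mathlib

section
/- Suppose A Z_k = U_{k+1} M_k and Aᵀ U_{k+1} = V_{k+1} T_{k+1}, where U_{k+1} and V_{k+1} have orthonormal columns, u_1 = b/β_1 with β_1 = ‖b‖_2, and T_{k+1} is upper triangular with (1,1) entry t_{11}. Then for any y ∈ ℝ^k, Aᵀ(A Z_k y − b) = V_{k+1}(T_{k+1} M_k y − β_1 t_{11} e_1), and ‖Aᵀ(A Z_k y − b)‖_2 = ‖T_{k+1} M_k y − β_1 t_{11} e_1‖_2. -/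
/-!
Write `e₁` for the first unit vector. Since `u₁ = b / β₁`, the right-hand side is `b = β₁ U e₁`,
so both `Aᵀ A Z y = Aᵀ U M y = V T M y` and `Aᵀ b = β₁ V T e₁` factor through `V`; as `T` is upper
triangular, `T e₁ = t₁₁ e₁`. The norm identity follows because `V` has orthonormal columns.
-/

open Matrix BigOperators Finset

namespace Matrix

variable {l m n o : Type*} [Fintype n]

theorem dotProduct_mulVec_self_of_transpose_mul_self_eq_one {α : Type*} [CommSemiring α]
    [Fintype m] [DecidableEq n] {V : Matrix m n α} (hV : Vᵀ * V = 1) (x : n → α) :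
    V *ᵥ x ⬝ᵥ V *ᵥ x = x ⬝ᵥ x := by
  rw [dotProduct_mulVec, vecMul_mulVec, hV, vecMul_one]

theorem IsUpperTriangular.mulVec_single_bot {α : Type*} [CommSemiring α] [DecidableEq n]
    [LinearOrder n] [OrderBot n] {T : Matrix n n α} (hT : T.IsUpperTriangular) (c : α) :
    T *ᵥ Pi.single ⊥ c = Pi.single ⊥ (T ⊥ ⊥ * c) := by
  ext i
  rw [mulVec_single, Pi.smul_apply, col_apply, MulOpposite.smul_eq_mul_unop,
    MulOpposite.unop_op]
  rcases eq_or_ne i ⊥ with rfl | hi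
  · rw [Pi.single_eq_same]
  · rw [Pi.single_eq_of_ne hi, hT (bot_lt_iff_ne_bot.2 hi), zero_mul]

theorem mulVec_single_eq_of_col_eq_div {α : Type*} [Field α] [DecidableEq n]
    {U : Matrix m n α} {b : m → α} {β : α} {j : n} (hU : ∀ i, U i j = b i / β) (hβ : β ≠ 0) :
    U *ᵥ Pi.single j β = b := by
  ext i
  rw [mulVec_single, Pi.smul_apply, col_apply, MulOpposite.smul_eq_mul_unop,
    MulOpposite.unop_op, hU, div_mul_cancel₀ _ hβ]

theorem transpose_mulVec_sub_eq_of_flexible_golubKahan {α : Type*} [CommRing α]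
    {A : Matrix l m α} {Z : Matrix m n α} {U : Matrix l o α} {M : Matrix o n α}
    {V : Matrix m o α} {T : Matrix o o α} [Fintype l] [Fintype m] [Fintype o]
    (hAZ : A * Z = U * M) (hAU : Aᵀ * U = V * T) {b : l → α} {c : o → α} (hb : b = U *ᵥ c)
    (y : n → α) :
    Aᵀ *ᵥ (A *ᵥ (Z *ᵥ y) - b) = V *ᵥ ((T * M) *ᵥ y - T *ᵥ c) := by
  have hZ : Aᵀ *ᵥ (A *ᵥ (Z *ᵥ y)) = V *ᵥ ((T * M) *ᵥ y) := by
    rw [mulVec_mulVec, mulVec_mulVec, Matrix.mul_assoc, hAZ, ← Matrix.mul_assoc, hAU, Matrix.mul_assoc,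
      ← mulVec_mulVec]
  have hb' : Aᵀ *ᵥ b = V *ᵥ (T *ᵥ c) := by
    rw [hb, mulVec_mulVec, hAU, ← mulVec_mulVec]
  rw [mulVec_sub, hZ, hb', ← mulVec_sub]

end Matrix

theorem stmt_4_general (m n k : ℕ) (A : Matrix (Fin m) (Fin n) ℝ) (b : Fin m → ℝ)
    (Z : Matrix (Fin n) (Fin k) ℝ) (M : Matrix (Fin (k + 1)) (Fin k) ℝ)
    (T : Matrix (Fin (k + 1)) (Fin (k + 1)) ℝ)
    (U : Matrix (Fin m) (Fin (k + 1)) ℝ) (V : Matrix (Fin n) (Fin (k + 1)) ℝ)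
    (β : ℝ) (hβ0 : β ≠ 0)
    (hV : Vᵀ * V = 1)
    (hu1 : ∀ i, U i 0 = b i / β)
    (hT : ∀ i j : Fin (k + 1), (j : ℕ) < (i : ℕ) → T i j = 0)
    (hAZ : A * Z = U * M) (hAU : Aᵀ * U = V * T) :
    ∀ y : Fin k → ℝ,
      Aᵀ.mulVec (A.mulVec (Z.mulVec y) - b)
        = V.mulVec ((T * M).mulVec y - (β * T 0 0) • (fun i => if i = 0 then (1:ℝ) else 0)) ∧
      Real.sqrt (∑ i, (Aᵀ.mulVec (A.mulVec (Z.mulVec y) - b) i) ^ 2)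
        = Real.sqrt (∑ i, ((T * M).mulVec y i - β * T 0 0 * (if i = 0 then (1:ℝ) else 0)) ^ 2) := by
  intro y
  have hTe₁ : T *ᵥ Pi.single 0 β = (β * T 0 0) • fun i => if i = 0 then (1:ℝ) else 0 := by
    have hTu : T.IsUpperTriangular := fun i j hij => hT i j hij
    ext i
    rw [← bot_eq_zero, hTu.mulVec_single_bot, Pi.single_apply]
    simp [mul_comm]
  have hres := transpose_mulVec_sub_eq_of_flexible_golubKahan hAZ hAU
    (mulVec_single_eq_of_col_eq_div hu1 hβ0).symm y
  rw [hTe₁] at hres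
  refine ⟨hres, ?_⟩
  have hnorm := dotProduct_mulVec_self_of_transpose_mul_self_eq_one hV
    ((T * M) *ᵥ y - (β * T 0 0) • fun i => if i = 0 then (1:ℝ) else 0)
  simp only [dotProduct, ← sq, ← hres] at hnorm
  rw [hnorm]
  simp

/-- FLSMR identity: Aᵀ(A Z y − b) = V (T M y − β t₁₁ e₁), with equal norms. -/
theorem stmt_4 (m n k : ℕ) (A : Matrix (Fin m) (Fin n) ℝ) (b : Fin m → ℝ)
    (Z : Matrix (Fin n) (Fin k) ℝ) (M : Matrix (Fin (k + 1)) (Fin k) ℝ)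
    (T : Matrix (Fin (k + 1)) (Fin (k + 1)) ℝ)
    (U : Matrix (Fin m) (Fin (k + 1)) ℝ) (V : Matrix (Fin n) (Fin (k + 1)) ℝ)
    (β : ℝ) (hβ : β = Real.sqrt (∑ i, (b i) ^ 2)) (hβ0 : β ≠ 0)
    (hU : Uᵀ * U = 1) (hV : Vᵀ * V = 1)
    (hu1 : ∀ i, U i 0 = b i / β)
    (hT : ∀ i j : Fin (k + 1), (j : ℕ) < (i : ℕ) → T i j = 0)
    (hAZ : A * Z = U * M) (hAU : Aᵀ * U = V * T) :
    ∀ y : Fin k → ℝ,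
      Aᵀ.mulVec (A.mulVec (Z.mulVec y) - b)
        = V.mulVec ((T * M).mulVec y - (β * T 0 0) • (fun i => if i = 0 then (1:ℝ) else 0)) ∧
      Real.sqrt (∑ i, (Aᵀ.mulVec (A.mulVec (Z.mulVec y) - b) i) ^ 2)
        = Real.sqrt (∑ i, ((T * M).mulVec y i - β * T 0 0 * (if i = 0 then (1:ℝ) else 0)) ^ 2) :=
  stmt_4_general m n k A b Z M T U V β hβ0 hV hu1 hT hAZ hAU
end

section
/- With the flexible Golub-Kahan relations A Z_k = U_{k+1} M_k and Aᵀ U_{k+1} = V_{k+1} T_{k+1} (U_{k+1}, V_{k+1} with orthonormal columns, u_1 = b/β_1, T_{k+1} upper triangular), the vector x_k = Z_k y_k, where y_k minimizes ‖T_{k+1} M_k y − β_1 t_{11} e_1‖_2 over y ∈ ℝ^k, minimizes ‖Aᵀ(Ax − b)‖_2 over all x in the column space of Z_k. -/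
open Matrix BigOperators Finset

private lemma key_eq (m n k : ℕ) (A : Matrix (Fin m) (Fin n) ℝ) (b : Fin m → ℝ)
    (Z : Matrix (Fin n) (Fin k) ℝ) (M : Matrix (Fin (k + 1)) (Fin k) ℝ)
    (T : Matrix (Fin (k + 1)) (Fin (k + 1)) ℝ)
    (U : Matrix (Fin m) (Fin (k + 1)) ℝ) (V : Matrix (Fin n) (Fin (k + 1)) ℝ)
    (β : ℝ) (hβ0 : β ≠ 0)
    (hV : Vᵀ * V = 1)
    (hu1 : ∀ i, U i 0 = b i / β)
    (hT : ∀ i j : Fin (k + 1), (j : ℕ) < (i : ℕ) → T i j = 0)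
    (hAZ : A * Z = U * M) (hAU : Aᵀ * U = V * T)
    (y : Fin k → ℝ) :
    (∑ i, (Aᵀ.mulVec (A.mulVec (Z.mulVec y) - b) i) ^ 2)
      = ∑ i, ((T * M).mulVec y i - β * T 0 0 * (if i = 0 then (1:ℝ) else 0)) ^ 2 := by
  set e1 : Fin (k+1) → ℝ := fun i => if i = 0 then (1:ℝ) else 0 with he1
  have hb : b = β • U.mulVec e1 := by
    funext i
    simp only [Pi.smul_apply, smul_eq_mul, mulVec, dotProduct, he1, mul_ite, mul_one, mul_zero]
    rw [Finset.sum_ite_eq' Finset.univ (0 : Fin (k+1)) (fun j => U i j)]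
    simp [hu1 i, mul_div_cancel₀ _ hβ0]
  have hTe1 : T.mulVec e1 = T 0 0 • e1 := by
    funext i
    simp only [mulVec, dotProduct, he1, mul_ite, mul_one, mul_zero, Pi.smul_apply,
      smul_eq_mul]
    rw [Finset.sum_ite_eq' Finset.univ (0 : Fin (k+1)) (fun j => T i j)]
    by_cases hi : i = 0
    · simp [hi]
    · have h0 : ((0 : Fin (k+1)) : ℕ) < (i : ℕ) :=
        Nat.pos_of_ne_zero (fun h => hi (Fin.ext h))
      simp [hi, hT i 0 h0]
  set w : Fin (k+1) → ℝ := fun i => (T * M).mulVec y i - β * T 0 0 * e1 i with hw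
  have hmain : Aᵀ.mulVec (A.mulVec (Z.mulVec y) - b) = V.mulVec w := by
    have h1 : A.mulVec (Z.mulVec y) = U.mulVec (M.mulVec y) := by
      rw [mulVec_mulVec, mulVec_mulVec, hAZ]
    rw [h1, hb]
    have h2 : U.mulVec (M.mulVec y) - β • U.mulVec e1
        = U.mulVec (M.mulVec y - β • e1) := by
      rw [mulVec_sub, mulVec_smul]
    rw [h2, mulVec_mulVec, hAU, ← mulVec_mulVec]
    congr 1
    have hw' : w = (T * M) *ᵥ y - (β * T 0 0) • e1 := by
      funext j; simp [hw, mul_assoc]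
    rw [hw', mulVec_sub, mulVec_smul, hTe1, mulVec_mulVec, smul_smul]
  rw [hmain]
  have hnorm : (V.mulVec w) ⬝ᵥ (V.mulVec w) = w ⬝ᵥ w := by
    rw [dotProduct_mulVec, ← mulVec_transpose, mulVec_mulVec, hV, one_mulVec]
  have hsq : ∀ (N : ℕ) (f : Fin N → ℝ), ∑ i, f i ^ 2 = f ⬝ᵥ f := by
    intro N f; simp [dotProduct, sq]
  rw [hsq, hsq, hnorm]

/-- FLSMR optimality: if y_k minimizes ‖T M y − β t₁₁ e₁‖ then x_k = Z y_k
    minimizes ‖Aᵀ(Ax − b)‖ over the column space of Z. -/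
theorem stmt_6 (m n k : ℕ) (A : Matrix (Fin m) (Fin n) ℝ) (b : Fin m → ℝ)
    (Z : Matrix (Fin n) (Fin k) ℝ) (M : Matrix (Fin (k + 1)) (Fin k) ℝ)
    (T : Matrix (Fin (k + 1)) (Fin (k + 1)) ℝ)
    (U : Matrix (Fin m) (Fin (k + 1)) ℝ) (V : Matrix (Fin n) (Fin (k + 1)) ℝ)
    (β : ℝ) (hβ : β = Real.sqrt (∑ i, (b i) ^ 2)) (hβ0 : β ≠ 0)
    (hU : Uᵀ * U = 1) (hV : Vᵀ * V = 1)
    (hu1 : ∀ i, U i 0 = b i / β)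
    (hT : ∀ i j : Fin (k + 1), (j : ℕ) < (i : ℕ) → T i j = 0)
    (hAZ : A * Z = U * M) (hAU : Aᵀ * U = V * T)
    (yk : Fin k → ℝ)
    (hyk : ∀ y : Fin k → ℝ,
      Real.sqrt (∑ i, ((T * M).mulVec yk i - β * T 0 0 * (if i = 0 then (1:ℝ) else 0)) ^ 2)
        ≤ Real.sqrt (∑ i, ((T * M).mulVec y i - β * T 0 0 * (if i = 0 then (1:ℝ) else 0)) ^ 2)) :
    ∀ y : Fin k → ℝ,
      Real.sqrt (∑ i, (Aᵀ.mulVec (A.mulVec (Z.mulVec yk) - b) i) ^ 2)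
        ≤ Real.sqrt (∑ i, (Aᵀ.mulVec (A.mulVec (Z.mulVec y) - b) i) ^ 2) := by
  intro y
  rw [key_eq m n k A b Z M T U V β hβ0 hV hu1 hT hAZ hAU yk,
      key_eq m n k A b Z M T U V β hβ0 hV hu1 hT hAZ hAU y]
  exact hyk y
end
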